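/- Suppose κ is a cardinal satisfying κ^ω = κ. For every κ-Borel set X ⊆ κ^κ there is a κ-Borel*-code (T,L) with T a subtree of κ^{<ω} such that for all ξ ∈ κ^κ, ξ ∈ X if and only if II has a winning strategy in GB(ξ,(T,L)); conversely, every set coded by a κ-Borel*-code with tree a subtree of κ^{<ω} is κ-Borel. -/

import Mathlib

open Cardinal Set

universe u v w

namespace GDST

variable {K : Type u} {A : Type v}

/-- The set `N_η` determined by the partial function with domain `Y` and values given by `η`. -/
def nbhd (Y : Set K) (η : K → A) : Set (K → A) := {ζ | ∀ i ∈ Y, ζ i = η i}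

/-- Basic κ-open subsets of `K → K`: sets `N_η` where `η` is a partial function with
domain of size `< #K`, together with the empty set. -/
def IsBasicOpen (S : Set (K → A)) : Prop :=
  (∃ (Y : Set K) (η : K → A), #Y < #K ∧ S = nbhd Y η) ∨ S = ∅

/-- Open in the topology generated by the basic κ-open sets. -/
def IsOpenStd (U : Set (K → A)) : Prop :=
  ∀ ζ ∈ U, ∃ S : Set (K → A), IsBasicOpen S ∧ ζ ∈ S ∧ S ⊆ U

/-- A union of at most `μ` basic κ-open sets; `(κ,μ)`-open. -/
def IsMuOpen (μ : Cardinal.{u}) (U : Set (K → A)) : Prop :=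
  ∃ (ι : Type u) (f : ι → Set (K → A)), #ι ≤ μ ∧ (∀ i, IsBasicOpen (f i)) ∧ U = ⋃ i, f i

/-- `(κ,μ)`-closed: the complement is `(κ,μ)`-open. -/
def IsMuClosed (μ : Cardinal.{u}) (C : Set (K → A)) : Prop := IsMuOpen μ Cᶜ

/-- The `(κ,μ)`-Borel sets: the smallest class containing the basic κ-open sets and closed
under complements and unions and intersections of length at most `μ`. -/
inductive MuBorel (μ : Cardinal.{u}) : Set (K → A) → Prop
  | basic (S : Set (K → A)) : IsBasicOpen S → MuBorel μ S
  | compl (S : Set (K → A)) : MuBorel μ S → MuBorel μ Sᶜ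
  | iUnion (ι : Type u) (f : ι → Set (K → A)) : #ι ≤ μ → (∀ i, MuBorel μ (f i)) →
      MuBorel μ (⋃ i, f i)
  | iInter (ι : Type u) (f : ι → Set (K → A)) : #ι ≤ μ → (∀ i, MuBorel μ (f i)) →
      MuBorel μ (⋂ i, f i)

/-- κ-open: a union of at most `κ = #K` basic κ-open sets. -/
def IsKOpen (U : Set (K → A)) : Prop := IsMuOpen #K U

/-- κ-closed. -/
def IsKClosed (C : Set (K → A)) : Prop := IsMuClosed #K C

/-- κ-Borel. -/
def KBorel (S : Set (K → A)) : Prop := MuBorel #K S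

/- Product space versions, for subsets of `(K → A) × (K → B)`. -/
section Prod

variable {B : Type w}

/-- Basic κ-open subsets of the product: products of basic κ-open sets. -/
def IsBasicOpen2 (S : Set ((K → A) × (K → B))) : Prop :=
  ∃ (S₁ : Set (K → A)) (S₂ : Set (K → B)), IsBasicOpen S₁ ∧ IsBasicOpen S₂ ∧ S = S₁ ×ˢ S₂

def IsOpenStd2 (U : Set ((K → A) × (K → B))) : Prop :=
  ∀ p ∈ U, ∃ S, IsBasicOpen2 S ∧ p ∈ S ∧ S ⊆ U

def IsMuOpen2 (μ : Cardinal.{u}) (U : Set ((K → A) × (K → B))) : Prop :=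
  ∃ (ι : Type u) (f : ι → Set ((K → A) × (K → B))),
    #ι ≤ μ ∧ (∀ i, IsBasicOpen2 (f i)) ∧ U = ⋃ i, f i

def IsMuClosed2 (μ : Cardinal.{u}) (C : Set ((K → A) × (K → B))) : Prop := IsMuOpen2 μ Cᶜ

inductive MuBorel2 (μ : Cardinal.{u}) : Set ((K → A) × (K → B)) → Prop
  | basic (S : Set ((K → A) × (K → B))) : IsBasicOpen2 S → MuBorel2 μ S
  | compl (S : Set ((K → A) × (K → B))) : MuBorel2 μ S → MuBorel2 μ Sᶜ
  | iUnion (ι : Type u) (f : ι → Set ((K → A) × (K → B))) : #ι ≤ μ → (∀ i, MuBorel2 μ (f i)) →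
      MuBorel2 μ (⋃ i, f i)
  | iInter (ι : Type u) (f : ι → Set ((K → A) × (K → B))) : #ι ≤ μ → (∀ i, MuBorel2 μ (f i)) →
      MuBorel2 μ (⋂ i, f i)

def IsKOpen2 (U : Set ((K → A) × (K → B))) : Prop := IsMuOpen2 #K U

def IsKClosed2 (C : Set ((K → A) × (K → B))) : Prop := IsMuClosed2 #K C

def KBorel2 (S : Set ((K → A) × (K → B))) : Prop := MuBorel2 #K S

/-- κ-Σ¹₁ : projections of κ-Borel subsets of the product. -/
def KSigma11 (S : Set (K → A)) : Prop :=
  ∃ C : Set ((K → A) × (K → A)), KBorel2 C ∧ S = Prod.fst '' C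

end Prod

end GDST

namespace GDST

/-- A labelled tree: a carrier with a partial-order relation, a boolean label on nodes
(true = union-node, false = intersection-node) and a set label on (leaf) nodes. -/
structure LTree (K : Type u) : Type (u + 1) where
  T : Type u
  le : T → T → Prop
  le_refl : ∀ t, le t t
  le_antisymm : ∀ a b, le a b → le b a → a = b
  le_trans : ∀ a b c, le a b → le b c → le a c
  isUnion : T → Bool
  leafLab : T → Set (K → K)

namespace LTree

variable {K : Type u} (G : LTree K)

def lt (a b : G.T) : Prop := G.le a b ∧ a ≠ b

def IsLeaf (t : G.T) : Prop := ∀ s, G.le t s → s = t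

def ImmSucc (a b : G.T) : Prop := G.lt a b ∧ ∀ c, G.le a c → G.le c b → c = a ∨ c = b

/-- No chain of order type κ. -/
def NoKBranch [LinearOrder K] : Prop :=
  ¬ ∃ f : K → G.T, ∀ a b : K, a < b → G.lt (f a) (f b)

/-- A good labelled (κ,λ)-tree: a tree of size at most λ without κ-branches, each node
having at most κ immediate successors, increasing chains having suprema, and leaves
labelled by basic κ-open sets. -/
def Good [LinearOrder K] (lam : Cardinal.{u}) : Prop :=
  G.NoKBranch ∧
  (∀ t : G.T, #{s : G.T // G.ImmSucc t s} ≤ #K) ∧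
  #G.T ≤ lam ∧
  (∀ C : Set G.T, (∀ a ∈ C, ∀ b ∈ C, G.le a b ∨ G.le b a) → C.Nonempty →
    ∃ s : G.T, (∀ c ∈ C, G.le c s) ∧ ∀ u : G.T, (∀ c ∈ C, G.le c u) → G.le s u) ∧
  (∀ t : G.T, G.IsLeaf t → IsBasicOpen (G.leafLab t))

/-- A weak good labelled κ-tree: as Good but with no restriction on the size of the tree. -/
def GoodWeak [LinearOrder K] : Prop :=
  G.NoKBranch ∧
  (∀ t : G.T, #{s : G.T // G.ImmSucc t s} ≤ #K) ∧
  (∀ C : Set G.T, (∀ a ∈ C, ∀ b ∈ C, G.le a b ∨ G.le b a) → C.Nonempty →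
    ∃ s : G.T, (∀ c ∈ C, G.le c s) ∧ ∀ u : G.T, (∀ c ∈ C, G.le c u) → G.le s u) ∧
  (∀ t : G.T, G.IsLeaf t → IsBasicOpen (G.leafLab t))

/-- A (positional) strategy of player II: at each union-node it picks an immediate successor. -/
def Legal (σ : G.T → G.T) : Prop :=
  ∀ t : G.T, ¬ G.IsLeaf t → G.isUnion t = true → G.ImmSucc t (σ t)

/-- A play of the game GB(ξ,(T,L)) in which II follows σ: a downward closed maximal chain
which at union-nodes follows σ. -/
def IsPlay (σ : G.T → G.T) (c : Set G.T) : Prop :=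
  c.Nonempty ∧
  (∀ a ∈ c, ∀ b ∈ c, G.le a b ∨ G.le b a) ∧
  (∀ a ∈ c, ∀ b : G.T, G.le b a → b ∈ c) ∧
  (∀ t ∈ c, ¬ G.IsLeaf t → ∃ s ∈ c, G.lt t s) ∧
  (∀ t ∈ c, ¬ G.IsLeaf t → G.isUnion t = true → σ t ∈ c)

/-- σ is a winning strategy of II in GB(ξ,(T,L)): every play following σ reaches a leaf
whose label contains ξ. -/
def Wins (σ : G.T → G.T) (ξ : K → K) : Prop :=
  ∀ c : Set G.T, G.IsPlay σ c → ∃ t ∈ c, G.IsLeaf t ∧ ξ ∈ G.leafLab t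

/-- II has a winning strategy in GB(ξ,(T,L)). -/
def IIWins (ξ : K → K) : Prop := ∃ σ : G.T → G.T, G.Legal σ ∧ G.Wins σ ξ

/-- (T,L) is a Borel*-code: there is a coding of strategies of II by elements of a κ-closed
set D ⊆ κ^κ such that every winnable game is won by a coded strategy and the set of pairs
(ξ,η) for which the coded strategy wins is κ-Borel. -/
def IsCode : Prop :=
  ∃ (D : Set (K → K)) (π : (K → K) → G.T → G.T),
    IsKClosed D ∧
    (∀ η ∈ D, G.Legal (π η)) ∧
    (∀ ξ : K → K, G.IIWins ξ → ∃ η ∈ D, G.Wins (π η) ξ) ∧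
    KBorel2 {p : (K → K) × (K → K) | p.2 ∈ D ∧ G.Wins (π p.2) p.1}

end LTree

/-- X is a (κ,λ)-Borel* set: coded by some good labelled (κ,λ)-tree which is a Borel*-code. -/
def IsBorelStar {K : Type u} [LinearOrder K] (lam : Cardinal.{u}) (X : Set (K → K)) : Prop :=
  ∃ G : LTree K, G.Good lam ∧ G.IsCode ∧ ∀ ξ : K → K, ξ ∈ X ↔ G.IIWins ξ

end GDST

namespace GDST

/-- G is (isomorphic to) a subtree of κ^{<ω}: it order-embeds onto a prefix-closed set of
finite sequences from K, ordered by the initial segment relation. -/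
def LTree.SubtreeOfFinSeqs {K : Type u} (G : LTree K) : Prop :=
  ∃ e : G.T → List K,
    Function.Injective e ∧
    (∀ a b : G.T, G.le a b ↔ e a <+: e b) ∧
    (∀ (a : G.T) (l : List K), l <+: e a → ∃ b : G.T, e b = l)

/-!
In a subtree of κ^{<ω} in which chains have suprema every chain is finite, so the game
GB(ξ,(T,L)) can be evaluated by recursion from the leaves: II wins from a ∪-node iff she wins
from some successor, and from a ∩-node iff she wins from all of them. The resulting set is
built from the leaf labels by κ-unions and κ-intersections, hence κ-Borel.

Conversely, a κ-Borel set and its complement are built together from basic open sets by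
κ-unions and κ-intersections; the construction is a well-founded κ-branching tree, i.e. a
subtree of κ^{<ω}, and its evaluation is the set. Fixing an injection cd : κ^{<ω} → κ, every
η ∈ κ^κ codes the strategy of II that plays η(cd l) at position l, and each strategy agrees
with a coded one at all of II's moves. Evaluating the game along the strategy coded by η is
the same recursion, now on pairs (ξ, η), which shows the winning set to be κ-Borel.
-/

namespace LTree

variable {K : Type u} (G : LTree K)

def IsChain (C : Set G.T) : Prop := ∀ a ∈ C, ∀ b ∈ C, G.le a b ∨ G.le b a

def ChainsHaveSups : Prop :=
  ∀ C : Set G.T, G.IsChain C → C.Nonempty →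
    ∃ s : G.T, (∀ c ∈ C, G.le c s) ∧ ∀ u : G.T, (∀ c ∈ C, G.le c u) → G.le s u

structure PrefixEmbedding where
  toList : G.T → List K
  injective : Function.Injective toList
  le_iff : ∀ a b, G.le a b ↔ toList a <+: toList b
  exists_of_prefix : ∀ (a : G.T) (l : List K), l <+: toList a → ∃ b, toList b = l

variable {G}

theorem SubtreeOfFinSeqs.nonempty_prefixEmbedding (h : G.SubtreeOfFinSeqs) :
    Nonempty G.PrefixEmbedding :=
  let ⟨e, he, hle, hpre⟩ := h
  ⟨⟨e, he, hle, hpre⟩⟩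

theorem lt_trans {a b c : G.T} (hab : G.lt a b) (hbc : G.lt b c) : G.lt a c :=
  ⟨G.le_trans _ _ _ hab.1 hbc.1, fun hac => hab.2 (G.le_antisymm _ _ hab.1 (hac ▸ hbc.1))⟩

namespace PrefixEmbedding

variable (E : G.PrefixEmbedding)
include E

theorem length_lt_of_lt {a b : G.T} (h : G.lt a b) :
    (E.toList a).length < (E.toList b).length := by
  have hpre := (E.le_iff a b).1 h.1
  exact hpre.length_le.lt_of_ne fun hlen => h.2 (E.injective (hpre.eq_of_length hlen))

theorem eq_of_le_of_length_le {a b : G.T} (h : G.le a b)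
    (hlen : (E.toList b).length ≤ (E.toList a).length) : a = b :=
  E.injective (((E.le_iff a b).1 h).eq_of_length (((E.le_iff a b).1 h).length_le.antisymm hlen))

theorem le_total_of_le {a b c : G.T} (hac : G.le a c) (hbc : G.le b c) :
    G.le a b ∨ G.le b a := by
  simp only [E.le_iff] at hac hbc ⊢
  exact List.prefix_or_prefix_of_prefix hac hbc

theorem le_of_toList_eq_nil {r : G.T} (hr : E.toList r = []) (t : G.T) : G.le r t := by
  rw [E.le_iff, hr]
  exact List.nil_prefix

theorem exists_toList_eq_nil (t : G.T) : ∃ r, E.toList r = [] :=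
  E.exists_of_prefix t [] List.nil_prefix

theorem immSucc_of_toList_eq_append {a s : G.T} {x : K}
    (hs : E.toList s = E.toList a ++ [x]) : G.ImmSucc a s := by
  have hlen : (E.toList s).length = (E.toList a).length + 1 := by simp [hs]
  have has : G.le a s := (E.le_iff a s).2 ⟨[x], hs.symm⟩
  refine ⟨⟨has, fun h => by rw [h] at hlen; omega⟩, fun c hac hcs => ?_⟩
  have h₁ := ((E.le_iff a c).1 hac).length_le
  have h₂ := ((E.le_iff c s).1 hcs).length_le
  rcases Nat.lt_or_ge (E.toList c).length (E.toList s).length with h | h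
  · exact Or.inl (E.eq_of_le_of_length_le hac (by omega)).symm
  · exact Or.inr (E.eq_of_le_of_length_le hcs h)

theorem exists_toList_eq_append_le {a s : G.T} (h : G.lt a s) :
    ∃ b x, E.toList b = E.toList a ++ [x] ∧ G.le b s := by
  have hpre := (E.le_iff a s).1 h.1
  have hlen := E.length_lt_of_lt h
  obtain ⟨b, hb⟩ := E.exists_of_prefix s _ (List.take_prefix ((E.toList a).length + 1) _)
  refine ⟨b, (E.toList s)[(E.toList a).length], ?_,
    (E.le_iff b s).2 (hb ▸ List.take_prefix _ _)⟩
  rw [hb, List.take_succ_eq_append_getElem hlen, ← List.prefix_iff_eq_take.1 hpre]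

theorem exists_immSucc_le {a s : G.T} (h : G.lt a s) : ∃ b, G.ImmSucc a b ∧ G.le b s :=
  let ⟨b, _, hb, hbs⟩ := E.exists_toList_eq_append_le h
  ⟨b, E.immSucc_of_toList_eq_append hb, hbs⟩

theorem exists_toList_eq_append_of_immSucc {a s : G.T} (h : G.ImmSucc a s) :
    ∃ x, E.toList s = E.toList a ++ [x] := by
  obtain ⟨b, x, hb, hbs⟩ := E.exists_toList_eq_append_le h.1
  rcases h.2 b (E.immSucc_of_toList_eq_append hb).1.1 hbs with rfl | rfl
  · simp at hb
  · exact ⟨x, hb⟩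

theorem exists_immSucc_of_not_isLeaf {a : G.T} (h : ¬ G.IsLeaf a) : ∃ b, G.ImmSucc a b := by
  simp only [IsLeaf, not_forall] at h
  obtain ⟨s, has, hne⟩ := h
  obtain ⟨b, hb, -⟩ := E.exists_immSucc_le ⟨has, Ne.symm hne⟩
  exact ⟨b, hb⟩

theorem eq_or_le_of_immSucc {t s m u : G.T} (hts : G.ImmSucc t s) (hsm : G.le s m)
    (htu : G.le t u) (hum : G.le u m) : u = t ∨ G.le s u := by
  rcases E.le_total_of_le hsm hum with hsu | hus
  · exact Or.inr hsu
  · rcases hts.2 u htu hus with rfl | rfl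
    · exact Or.inl rfl
    · exact Or.inr (G.le_refl u)

theorem mk_immSucc_le (t : G.T) : #{s : G.T // G.ImmSucc t s} ≤ #K := by
  choose x hx using fun s : {s : G.T // G.ImmSucc t s} => E.exists_toList_eq_append_of_immSucc s.2
  refine Cardinal.mk_le_of_injective (f := x) fun s s' h => Subtype.ext (E.injective ?_)
  rw [hx, hx, h]

theorem exists_max_of_isChain {C : Set G.T} (hC : G.IsChain C) (hne : C.Nonempty) {N : ℕ}
    (hN : ∀ t ∈ C, (E.toList t).length ≤ N) : ∃ m ∈ C, ∀ t ∈ C, G.le t m := by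
  have hbdd : BddAbove ((fun t => (E.toList t).length) '' C) :=
    ⟨N, by rintro _ ⟨t, ht, rfl⟩; exact hN t ht⟩
  obtain ⟨m, hm, hmlen⟩ := Nat.sSup_mem (hne.image _) hbdd
  refine ⟨m, hm, fun t ht => (hC t ht m hm).elim id fun hmt => ?_⟩
  obtain rfl := E.eq_of_le_of_length_le hmt ((le_csSup hbdd ⟨t, ht, rfl⟩).trans_eq hmlen.symm)
  exact G.le_refl _

theorem chainsHaveSups_of_length_bounded
    (h : ∀ C, G.IsChain C → ∃ N, ∀ t ∈ C, (E.toList t).length ≤ N) :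
    G.ChainsHaveSups := by
  intro C hC hne
  obtain ⟨N, hN⟩ := h C hC
  obtain ⟨m, hm, hmax⟩ := E.exists_max_of_isChain hC hne hN
  exact ⟨m, hmax, fun u hu => hu m hm⟩

/-- Along a strictly increasing family the lengths strictly increase, and a supremum of the
family bounds them. -/
theorem finite_of_strictMono (hsup : G.ChainsHaveSups) {ι : Type*} [LinearOrder ι]
    (f : ι → G.T) (hf : ∀ a b, a < b → G.lt (f a) (f b)) : Finite ι := by
  cases isEmpty_or_nonempty ι with
  | inl _ => infer_instance
  | inr hι =>
    have hchain : G.IsChain (Set.range f) := by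
      rintro _ ⟨a, rfl⟩ _ ⟨b, rfl⟩
      rcases lt_trichotomy a b with h | rfl | h
      · exact Or.inl (hf a b h).1
      · exact Or.inl (G.le_refl _)
      · exact Or.inr (hf b a h).1
    obtain ⟨s, hs, -⟩ := hsup _ hchain (Set.range_nonempty f)
    have hmono : StrictMono fun a => (E.toList (f a)).length :=
      fun a b h => E.length_lt_of_lt (hf a b h)
    have hbound : ∀ a, (E.toList (f a)).length < (E.toList s).length + 1 :=
      fun a => Nat.lt_succ_of_le ((E.le_iff _ _).1 (hs _ ⟨a, rfl⟩)).length_le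
    exact Finite.of_injective (fun a => (⟨_, hbound a⟩ : Fin _))
      fun a b h => hmono.injective (congrArg Fin.val h)

theorem noKBranch [LinearOrder K] [Infinite K] (hsup : G.ChainsHaveSups) : G.NoKBranch :=
  fun ⟨f, hf⟩ => (E.finite_of_strictMono hsup f hf).false

theorem wellFounded (hsup : G.ChainsHaveSups) : WellFounded (flip G.ImmSucc) := by
  refine wellFounded_iff_isEmpty_descending_chain.2 ⟨fun ⟨f, hf⟩ => ?_⟩
  have hlt : ∀ a b, a < b → G.lt (f a) (f b) := fun a b hab => by
    induction b, hab using Nat.le_induction with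
    | base => exact (hf a).1
    | succ b _ ih => exact lt_trans ih (hf b).1
  exact (E.finite_of_strictMono hsup f hlt).false

end PrefixEmbedding

end LTree

namespace LTree

variable {K : Type u} (G : LTree K) (hwf : WellFounded (flip G.ImmSucc))

noncomputable def eval : G.T → Set (K → K) :=
  open Classical in
  hwf.fix fun t ih =>
    if G.IsLeaf t then G.leafLab t
    else if G.isUnion t then ⋃ s : {s // G.ImmSucc t s}, ih s s.2
    else ⋂ s : {s // G.ImmSucc t s}, ih s s.2

/-- The value `∅` at an illegal move is junk, never reached by a legal `σ`. -/
noncomputable def evalAlong (σ : G.T → G.T) : G.T → Set (K → K) :=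
  open Classical in
  hwf.fix fun t ih =>
    if G.IsLeaf t then G.leafLab t
    else if G.isUnion t then (if h : G.ImmSucc t (σ t) then ih (σ t) h else ∅)
    else ⋂ s : {s // G.ImmSucc t s}, ih s s.2

variable {G} {t : G.T}

theorem eval_of_isLeaf (h : G.IsLeaf t) : G.eval hwf t = G.leafLab t := by
  rw [eval, hwf.fix_eq, if_pos h]

theorem eval_of_isUnion (h : ¬ G.IsLeaf t) (hu : G.isUnion t = true) :
    G.eval hwf t = ⋃ s : {s // G.ImmSucc t s}, G.eval hwf s := by
  rw [eval, hwf.fix_eq, if_neg h, if_pos hu]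

theorem eval_of_not_isUnion (h : ¬ G.IsLeaf t) (hu : G.isUnion t = false) :
    G.eval hwf t = ⋂ s : {s // G.ImmSucc t s}, G.eval hwf s := by
  rw [eval, hwf.fix_eq, if_neg h, if_neg (by simp [hu])]

variable {σ : G.T → G.T}

theorem evalAlong_of_isLeaf (h : G.IsLeaf t) : G.evalAlong hwf σ t = G.leafLab t := by
  rw [evalAlong, hwf.fix_eq, if_pos h]

theorem evalAlong_of_isUnion (hσ : G.Legal σ) (h : ¬ G.IsLeaf t) (hu : G.isUnion t = true) :
    G.evalAlong hwf σ t = G.evalAlong hwf σ (σ t) := by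
  rw [evalAlong, hwf.fix_eq, if_neg h, if_pos hu, dif_pos (hσ t h hu)]

theorem evalAlong_of_not_isUnion (h : ¬ G.IsLeaf t) (hu : G.isUnion t = false) :
    G.evalAlong hwf σ t = ⋂ s : {s // G.ImmSucc t s}, G.evalAlong hwf σ s := by
  rw [evalAlong, hwf.fix_eq, if_neg h, if_neg (by simp [hu])]

theorem evalAlong_subset_eval (hσ : G.Legal σ) (t : G.T) :
    G.evalAlong hwf σ t ⊆ G.eval hwf t := by
  induction t using hwf.induction with
  | _ t ih =>
  by_cases h : G.IsLeaf t
  · rw [evalAlong_of_isLeaf hwf h, eval_of_isLeaf hwf h]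
  cases hu : G.isUnion t
  · rw [evalAlong_of_not_isUnion hwf h hu, eval_of_not_isUnion hwf h hu]
    exact Set.iInter_mono fun s => ih s s.2
  · rw [evalAlong_of_isUnion hwf hσ h hu, eval_of_isUnion hwf h hu]
    exact (ih _ (hσ t h hu)).trans (Set.subset_iUnion_of_subset ⟨σ t, hσ t h hu⟩ subset_rfl)

theorem kBorel_eval (himm : ∀ t : G.T, #{s : G.T // G.ImmSucc t s} ≤ #K)
    (hleaf : ∀ t : G.T, G.IsLeaf t → IsBasicOpen (G.leafLab t)) (t : G.T) :
    KBorel (G.eval hwf t) := by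
  induction t using hwf.induction with
  | _ t ih =>
  by_cases h : G.IsLeaf t
  · rw [eval_of_isLeaf hwf h]
    exact .basic _ (hleaf t h)
  cases hu : G.isUnion t
  · rw [eval_of_not_isUnion hwf h hu]
    exact .iInter _ _ (himm t) fun s => ih s s.2
  · rw [eval_of_isUnion hwf h hu]
    exact .iUnion _ _ (himm t) fun s => ih s s.2

theorem wins_congr {σ' : G.T → G.T}
    (h : ∀ t, ¬ G.IsLeaf t → G.isUnion t = true → σ' t = σ t)
    {ξ : K → K} (hw : G.Wins σ ξ) : G.Wins σ' ξ := by
  rintro c ⟨hne, hchain, hdown, hext, hfollow⟩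
  refine hw c ⟨hne, hchain, hdown, hext, fun t ht hl hu => ?_⟩
  rw [← h t hl hu]
  exact hfollow t ht hl hu

namespace PrefixEmbedding

variable (E : G.PrefixEmbedding)
include E

theorem isPlay_Iic {m : G.T} (hm : G.IsLeaf m)
    (hfollow : ∀ u, G.le u m → ¬ G.IsLeaf u → G.isUnion u = true → G.le (σ u) m) :
    G.IsPlay σ {u | G.le u m} := by
  refine ⟨⟨m, G.le_refl m⟩, fun a ha b hb => E.le_total_of_le ha hb,
    fun a ha b hba => G.le_trans _ _ _ hba ha, fun t ht hl => ?_, hfollow⟩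
  exact ⟨m, G.le_refl m, ht, fun h => hl (h ▸ hm)⟩

theorem exists_leaf_mem_of_mem_evalAlong (hσ : G.Legal σ) {c : Set G.T} (hc : G.IsPlay σ c)
    {ξ : K → K} (t : G.T) (htc : t ∈ c) (ht : ξ ∈ G.evalAlong hwf σ t) :
    ∃ m ∈ c, G.IsLeaf m ∧ ξ ∈ G.leafLab m := by
  obtain ⟨-, -, hdown, hext, hfollow⟩ := hc
  induction t using hwf.induction with
  | _ t ih =>
  by_cases h : G.IsLeaf t
  · exact ⟨t, htc, h, by rwa [evalAlong_of_isLeaf hwf h] at ht⟩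
  cases hu : G.isUnion t
  · obtain ⟨u, huc, htu⟩ := hext t htc h
    obtain ⟨s, hts, hsu⟩ := E.exists_immSucc_le htu
    rw [evalAlong_of_not_isUnion hwf h hu] at ht
    exact ih s hts (hdown u huc s hsu) (Set.mem_iInter.1 ht ⟨s, hts⟩)
  · rw [evalAlong_of_isUnion hwf hσ h hu] at ht
    exact ih (σ t) (hσ t h hu) (hfollow t htc h hu) ht

/-- Player I's counterplay: at intersection nodes move to a successor outside `evalAlong`. -/
theorem exists_leaf_not_mem_of_not_mem_evalAlong (hσ : G.Legal σ) {ξ : K → K} (t : G.T)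
    (ht : ξ ∉ G.evalAlong hwf σ t) :
    ∃ m, G.le t m ∧ G.IsLeaf m ∧ ξ ∉ G.leafLab m ∧
      ∀ u, G.le t u → G.le u m → ¬ G.IsLeaf u → G.isUnion u = true → G.le (σ u) m := by
  induction t using hwf.induction with
  | _ t ih =>
  by_cases h : G.IsLeaf t
  · refine ⟨t, G.le_refl t, h, by rwa [evalAlong_of_isLeaf hwf h] at ht, fun u htu _ hu => ?_⟩
    exact absurd (h u htu ▸ h) hu
  obtain ⟨s, hts, hs, hσs⟩ : ∃ s, G.ImmSucc t s ∧ ξ ∉ G.evalAlong hwf σ s ∧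
      (G.isUnion t = true → σ t = s) := by
    cases hu : G.isUnion t
    · rw [evalAlong_of_not_isUnion hwf h hu, Set.mem_iInter, not_forall] at ht
      obtain ⟨⟨s, hts⟩, hs⟩ := ht
      exact ⟨s, hts, hs, nofun⟩
    · rw [evalAlong_of_isUnion hwf hσ h hu] at ht
      exact ⟨σ t, hσ t h hu, ht, fun _ => rfl⟩
  obtain ⟨m, hsm, hm, hξm, hfollow⟩ := ih s hts hs
  refine ⟨m, G.le_trans _ _ _ hts.1.1 hsm, hm, hξm, fun u htu hum hul huu => ?_⟩
  rcases E.eq_or_le_of_immSucc hts hsm htu hum with rfl | hsu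
  · exact hσs huu ▸ hsm
  · exact hfollow u hsu hum hul huu

theorem wins_iff_mem_evalAlong (hσ : G.Legal σ) {r : G.T} (hr : E.toList r = []) (ξ : K → K) :
    G.Wins σ ξ ↔ ξ ∈ G.evalAlong hwf σ r := by
  refine ⟨fun hw => ?_, fun hξ c hc => ?_⟩
  · by_contra hξ
    obtain ⟨m, -, hm, hξm, hfollow⟩ := E.exists_leaf_not_mem_of_not_mem_evalAlong hwf hσ r hξ
    obtain ⟨t, htm, ht, hξt⟩ :=
      hw _ (E.isPlay_Iic hm fun u => hfollow u (E.le_of_toList_eq_nil hr u))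
    exact hξm (ht m htm ▸ hξt)
  · obtain ⟨t, htc⟩ := hc.1
    exact E.exists_leaf_mem_of_mem_evalAlong hwf hσ hc r
      (hc.2.2.1 t htc r (E.le_of_toList_eq_nil hr t)) hξ

theorem exists_legal_mem_evalAlong {ξ : K → K} {t₀ : G.T} (h : ξ ∈ G.eval hwf t₀) :
    ∃ σ, G.Legal σ ∧ ξ ∈ G.evalAlong hwf σ t₀ := by
  have hchoice : ∀ t, ¬ G.IsLeaf t → G.isUnion t = true →
      ∃ s, G.ImmSucc t s ∧ (ξ ∈ G.eval hwf t → ξ ∈ G.eval hwf s) := fun t hl hu => by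
    by_cases ht : ξ ∈ G.eval hwf t
    · rw [eval_of_isUnion hwf hl hu, Set.mem_iUnion] at ht
      obtain ⟨⟨s, hts⟩, hs⟩ := ht
      exact ⟨s, hts, fun _ => hs⟩
    · obtain ⟨s, hts⟩ := E.exists_immSucc_of_not_isLeaf hl
      exact ⟨s, hts, fun h' => absurd h' ht⟩
  have : Nonempty G.T := ⟨t₀⟩
  choose! σ hσ using hchoice
  refine ⟨σ, fun t h hu => (hσ t h hu).1, ?_⟩
  induction t₀ using hwf.induction with
  | _ t ih =>
  by_cases hl : G.IsLeaf t
  · rwa [evalAlong_of_isLeaf hwf hl, ← eval_of_isLeaf hwf hl]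
  cases hu : G.isUnion t
  · rw [eval_of_not_isUnion hwf hl hu, Set.mem_iInter] at h
    rw [evalAlong_of_not_isUnion hwf hl hu, Set.mem_iInter]
    exact fun s => ih s s.2 (h s)
  · rw [evalAlong_of_isUnion hwf (fun t h hu => (hσ t h hu).1) hl hu]
    exact ih _ (hσ t hl hu).1 ((hσ t hl hu).2 h)

theorem iiWins_iff_mem_eval {r : G.T} (hr : E.toList r = []) (ξ : K → K) :
    G.IIWins ξ ↔ ξ ∈ G.eval hwf r := by
  constructor
  · rintro ⟨σ, hσ, hw⟩
    exact evalAlong_subset_eval hwf hσ r ((E.wins_iff_mem_evalAlong hwf hσ hr ξ).1 hw)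
  · intro h
    obtain ⟨σ, hσ, hξ⟩ := E.exists_legal_mem_evalAlong hwf h
    exact ⟨σ, hσ, (E.wins_iff_mem_evalAlong hwf hσ hr ξ).2 hξ⟩

end PrefixEmbedding

end LTree

section BasicOpen

variable {K : Type u}

theorem isBasicOpen_univ [Nonempty K] : IsBasicOpen (Set.univ : Set (K → K)) :=
  Or.inl ⟨∅, id, by simpa using pos_iff_ne_zero.2 (Cardinal.mk_ne_zero K),
    by ext; simp [nbhd]⟩

theorem isBasicOpen_empty : IsBasicOpen (∅ : Set (K → K)) := Or.inr rfl

theorem isBasicOpen_nbhd_singleton [Infinite K] (i x : K) :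
    IsBasicOpen (nbhd {i} fun _ => x : Set (K → K)) :=
  Or.inl ⟨{i}, _, by simpa using Cardinal.one_lt_aleph0.trans_le (Cardinal.aleph0_le_mk K), rfl⟩

theorem kBorel2_inter [Infinite K] {S T : Set ((K → K) × (K → K))}
    (hS : KBorel2 S) (hT : KBorel2 T) : KBorel2 (S ∩ T) := by
  rw [Set.inter_eq_iInter, ← Equiv.ulift.{u}.surjective.iInter_comp]
  refine .iInter _ _ ((Cardinal.lt_aleph0_of_finite _).le.trans (Cardinal.aleph0_le_mk K)) ?_
  rintro ⟨_ | _⟩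
  exacts [hT, hS]

theorem isKClosed_univ : IsKClosed (Set.univ : Set (K → K)) :=
  ⟨PEmpty, PEmpty.elim, by simp, nofun, by simp⟩

end BasicOpen

theorem kBorel_setOf_iiWins {K : Type u} [LinearOrder K] [Nonempty K] {G : LTree K}
    (hg : G.Good #K) (hsub : G.SubtreeOfFinSeqs) : KBorel {ξ | G.IIWins ξ} := by
  obtain ⟨E⟩ := hsub.nonempty_prefixEmbedding
  obtain ⟨-, himm, -, hsup, hleaf⟩ := hg
  cases isEmpty_or_nonempty G.T with
  | inl _ =>
    have : {ξ | G.IIWins ξ} = Set.univ :=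
      Set.eq_univ_of_forall fun ξ => ⟨id, isEmptyElim, fun c hc => isEmptyElim hc.1.some⟩
    rw [this]
    exact .basic _ isBasicOpen_univ
  | inr h =>
    obtain ⟨r, hr⟩ := E.exists_toList_eq_nil h.some
    have hwf := E.wellFounded hsup
    rw [show {ξ | G.IIWins ξ} = G.eval hwf r from Set.ext (E.iiWins_iff_mem_eval hwf hr)]
    exact LTree.kBorel_eval hwf himm hleaf r

/-- `node true` is a union node, `node false` an intersection node. -/
inductive BorelCode (K : Type u) : Type u
  | leaf : Set (K → K) → BorelCode K
  | node : Bool → (K → BorelCode K) → BorelCode K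

namespace BorelCode

variable {K : Type u}

def step : BorelCode K → K → Option (BorelCode K)
  | leaf _, _ => none
  | node _ g, a => some (g a)

def subcode (c : BorelCode K) (l : List K) : Option (BorelCode K) := l.foldlM step c

def Valid : BorelCode K → Prop
  | leaf S => IsBasicOpen S
  | node _ g => ∀ a, Valid (g a)

def eval : BorelCode K → Set (K → K)
  | leaf S => S
  | node true g => ⋃ a, eval (g a)
  | node false g => ⋂ a, eval (g a)

def isUnion : BorelCode K → Bool
  | leaf _ => false
  | node b _ => b

def label : BorelCode K → Set (K → K)
  | leaf S => S
  | node _ _ => ∅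

@[simp] theorem subcode_nil (c : BorelCode K) : c.subcode [] = some c := rfl

@[simp] theorem subcode_leaf_cons (S : Set (K → K)) (a : K) (l : List K) :
    (leaf S).subcode (a :: l) = none := rfl

@[simp] theorem subcode_node_cons (b : Bool) (g : K → BorelCode K) (a : K) (l : List K) :
    (node b g).subcode (a :: l) = (g a).subcode l := rfl

theorem subcode_append (c : BorelCode K) (l l' : List K) :
    c.subcode (l ++ l') = (c.subcode l).bind (·.subcode l') :=
  List.foldlM_append

theorem isSome_subcode_of_prefix {c : BorelCode K} {l l' : List K} (h : l <+: l')
    (h' : (c.subcode l').isSome) : (c.subcode l).isSome := by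
  obtain ⟨l'', rfl⟩ := h
  rw [subcode_append] at h'
  cases hl : c.subcode l <;> simp_all

theorem Valid.subcode {c : BorelCode K} (hc : c.Valid) {l : List K} {d : BorelCode K}
    (h : c.subcode l = some d) : d.Valid := by
  induction l generalizing c with
  | nil => simp_all
  | cons a l ih => cases c with
    | leaf S => simp at h
    | node b g => exact ih (hc a) h

/-- All nonempty members of a chain start with the same letter, so this is induction on the
code. -/
theorem exists_length_bound_of_chain (c : BorelCode K) (C : Set (List K))
    (hC : ∀ l ∈ C, (c.subcode l).isSome)
    (hchain : ∀ l ∈ C, ∀ l' ∈ C, l <+: l' ∨ l' <+: l) :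
    ∃ N, ∀ l ∈ C, l.length ≤ N := by
  induction c generalizing C with
  | leaf S =>
    refine ⟨0, fun l hl => ?_⟩
    cases l with
    | nil => rfl
    | cons a l => simpa using hC _ hl
  | node b g ih =>
    by_cases hcons : ∃ a l, a :: l ∈ C
    · obtain ⟨a, l₀, hl₀⟩ := hcons
      have head : ∀ a' l, a' :: l ∈ C → a' = a := fun a' l hl => by
        rcases hchain _ hl _ hl₀ with h | h <;> simp_all [List.cons_prefix_cons]
      obtain ⟨N, hN⟩ := ih a {l | a :: l ∈ C} (fun l hl => hC _ hl)
        (fun l hl l' hl' => by simpa [List.cons_prefix_cons] using hchain _ hl _ hl')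
      refine ⟨N + 1, fun l hl => ?_⟩
      cases l with
      | nil => simp
      | cons a' l =>
        obtain rfl := head a' l hl
        simpa using hN l hl
    · refine ⟨0, fun l hl => ?_⟩
      cases l with
      | nil => rfl
      | cons a l => exact absurd ⟨a, l, hl⟩ hcons

def IsCoded (X : Set (K → K)) : Prop := ∃ c : BorelCode K, c.Valid ∧ c.eval = X

theorem isCoded_of_isBasicOpen {S : Set (K → K)} (hS : IsBasicOpen S) : IsCoded S :=
  ⟨leaf S, hS, rfl⟩

/-- `ζ ∉ N_η` iff `ζ i = x` for some `i ∈ Y` and `x ≠ η i`: a union of `K × K` basic sets,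
written as two nested unions over `K`. -/
theorem isCoded_compl_of_isBasicOpen [Infinite K] {S : Set (K → K)} (hS : IsBasicOpen S) :
    IsCoded Sᶜ := by
  classical
  rcases hS with ⟨Y, η, -, rfl⟩ | rfl
  · let F : K → K → Set (K → K) := fun i x =>
      if i ∈ Y ∧ x ≠ η i then nbhd {i} fun _ => x else ∅
    refine ⟨node true fun i => node true fun x => leaf (F i x), fun i x => ?_, ?_⟩
    · by_cases h : i ∈ Y ∧ x ≠ η i
      · simpa [Valid, F, h] using isBasicOpen_nbhd_singleton i x
      · simpa [Valid, F, h] using isBasicOpen_empty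
    · ext ζ
      simp only [eval, Set.mem_iUnion, Set.mem_compl_iff, nbhd, F]
      constructor
      · rintro ⟨i, x, hζ⟩ hmem
        split_ifs at hζ with h
        · exact h.2 ((hζ i rfl).symm.trans (hmem i h.1))
        · exact hζ
      · intro hmem
        obtain ⟨i, hi, hne⟩ : ∃ i ∈ Y, ζ i ≠ η i := by simpa using hmem
        exact ⟨i, ζ i, by simp [hi, hne]⟩
  · rw [Set.compl_empty]
    exact isCoded_of_isBasicOpen isBasicOpen_univ

theorem isCoded_iUnion {ι : Type u} (hι : #ι ≤ #K) {f : ι → Set (K → K)}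
    (h : ∀ i, IsCoded (f i)) : IsCoded (⋃ i, f i) := by
  cases isEmpty_or_nonempty ι with
  | inl _ =>
    rw [Set.iUnion_of_empty]
    exact isCoded_of_isBasicOpen isBasicOpen_empty
  | inr _ =>
    obtain ⟨emb⟩ := (Cardinal.le_def ι K).1 hι
    have hs := Function.invFun_surjective emb.injective
    choose c hc using h
    refine ⟨node true fun a => c (Function.invFun emb a), fun a => (hc _).1, ?_⟩
    simp only [eval, (hc _).2]
    exact hs.iUnion_comp f

theorem isCoded_iInter [Nonempty K] {ι : Type u} (hι : #ι ≤ #K) {f : ι → Set (K → K)}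
    (h : ∀ i, IsCoded (f i)) : IsCoded (⋂ i, f i) := by
  cases isEmpty_or_nonempty ι with
  | inl _ =>
    rw [Set.iInter_of_empty]
    exact isCoded_of_isBasicOpen isBasicOpen_univ
  | inr _ =>
    obtain ⟨emb⟩ := (Cardinal.le_def ι K).1 hι
    have hs := Function.invFun_surjective emb.injective
    choose c hc using h
    refine ⟨node false fun a => c (Function.invFun emb a), fun a => (hc _).1, ?_⟩
    simp only [eval, (hc _).2]
    exact hs.iInter_comp f

/-- Codes have no complementation, so a code of the complement is built alongside. -/
theorem isCoded_and_isCoded_compl [Infinite K] {X : Set (K → K)} (hX : KBorel X) :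
    IsCoded X ∧ IsCoded Xᶜ := by
  induction hX with
  | basic S hS => exact ⟨isCoded_of_isBasicOpen hS, isCoded_compl_of_isBasicOpen hS⟩
  | compl S _ ih => exact ⟨ih.2, (compl_compl S).symm ▸ ih.1⟩
  | iUnion ι f hι _ ih =>
    exact ⟨isCoded_iUnion hι fun i => (ih i).1,
      Set.compl_iUnion f ▸ isCoded_iInter hι fun i => (ih i).2⟩
  | iInter ι f hι _ ih =>
    exact ⟨isCoded_iInter hι fun i => (ih i).1,
      Set.compl_iInter f ▸ isCoded_iUnion hι fun i => (ih i).2⟩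

variable (c : BorelCode K)

def toLTree : LTree K where
  T := {l : List K // (c.subcode l).isSome}
  le a b := a.1 <+: b.1
  le_refl _ := List.prefix_refl _
  le_antisymm _ _ h₁ h₂ := Subtype.ext (h₁.eq_of_length (h₁.length_le.antisymm h₂.length_le))
  le_trans _ _ _ h₁ h₂ := h₁.trans h₂
  isUnion t := ((c.subcode t.1).get t.2).isUnion
  leafLab t := ((c.subcode t.1).get t.2).label

def nodeCode (t : c.toLTree.T) : BorelCode K := (c.subcode t.1).get t.2

def root : c.toLTree.T := ⟨[], rfl⟩

def prefixEmbedding : c.toLTree.PrefixEmbedding :=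
  ⟨Subtype.val, Subtype.val_injective, fun _ _ => Iff.rfl,
    fun a _ h => ⟨⟨_, isSome_subcode_of_prefix h a.2⟩, rfl⟩⟩

theorem subtreeOfFinSeqs : c.toLTree.SubtreeOfFinSeqs :=
  let E := c.prefixEmbedding
  ⟨E.toList, E.injective, E.le_iff, E.exists_of_prefix⟩

variable {c} {t : c.toLTree.T}

theorem subcode_eq_nodeCode (t : c.toLTree.T) : c.subcode t.1 = some (c.nodeCode t) :=
  (Option.some_get _).symm

@[simp] theorem nodeCode_root : c.nodeCode c.root = c := rfl

theorem isLeaf_of_nodeCode_eq_leaf {S : Set (K → K)} (h : c.nodeCode t = leaf S) :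
    c.toLTree.IsLeaf t := by
  rintro s ⟨l, hl⟩
  have hs := s.2
  rw [← hl, subcode_append, subcode_eq_nodeCode, h] at hs
  cases l with
  | nil => exact Subtype.ext (by simpa using hl.symm)
  | cons a l => simp at hs

section Children

variable {b : Bool} {g : K → BorelCode K} (h : c.nodeCode t = node b g)
include h

theorem subcode_append_singleton (a : K) : c.subcode (t.1 ++ [a]) = some (g a) := by
  simp [subcode_append, subcode_eq_nodeCode, h]

def child (a : K) : c.toLTree.T := ⟨t.1 ++ [a], by simp [subcode_append_singleton h]⟩

theorem nodeCode_child (a : K) : c.nodeCode (child h a) = g a :=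
  Option.some_injective _ ((subcode_eq_nodeCode _).symm.trans (subcode_append_singleton h a))

theorem immSucc_child (a : K) : c.toLTree.ImmSucc t (child h a) :=
  c.prefixEmbedding.immSucc_of_toList_eq_append rfl

theorem surjective_child :
    Function.Surjective fun a =>
      (⟨child h a, immSucc_child h a⟩ : {s // c.toLTree.ImmSucc t s}) := by
  rintro ⟨s, hs⟩
  obtain ⟨x, hx⟩ := c.prefixEmbedding.exists_toList_eq_append_of_immSucc hs
  exact ⟨x, Subtype.ext (Subtype.ext hx.symm)⟩

theorem not_isLeaf_of_nodeCode_eq_node [Nonempty K] : ¬ c.toLTree.IsLeaf t := fun hl =>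
  (immSucc_child h (Classical.arbitrary K)).1.2 (hl _ (immSucc_child h _).1.1).symm

end Children

theorem exists_nodeCode_eq_node (hl : ¬ c.toLTree.IsLeaf t) : ∃ b g, c.nodeCode t = node b g := by
  cases h : c.nodeCode t with
  | leaf S => exact absurd (isLeaf_of_nodeCode_eq_leaf h) hl
  | node b g => exact ⟨b, g, rfl⟩

theorem isBasicOpen_leafLab [Nonempty K] (hc : c.Valid) (hl : c.toLTree.IsLeaf t) :
    IsBasicOpen (c.toLTree.leafLab t) := by
  show IsBasicOpen (c.nodeCode t).label
  cases h : c.nodeCode t with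
  | leaf S => exact hc.subcode ((subcode_eq_nodeCode t).trans (congrArg some h))
  | node b g => exact absurd hl (not_isLeaf_of_nodeCode_eq_node h)

variable (c)

theorem chainsHaveSups : c.toLTree.ChainsHaveSups :=
  c.prefixEmbedding.chainsHaveSups_of_length_bounded fun C hC =>
    let ⟨N, hN⟩ := c.exists_length_bound_of_chain (Subtype.val '' C)
      (by rintro _ ⟨t, -, rfl⟩; exact t.2)
      (by rintro _ ⟨a, ha, rfl⟩ _ ⟨b, hb, rfl⟩; exact hC a ha b hb)
    ⟨N, fun t ht => hN _ ⟨t, ht, rfl⟩⟩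

theorem wellFounded : WellFounded (flip c.toLTree.ImmSucc) :=
  c.prefixEmbedding.wellFounded c.chainsHaveSups

theorem good_toLTree [LinearOrder K] [Infinite K] (hc : c.Valid) : c.toLTree.Good #K :=
  ⟨c.prefixEmbedding.noKBranch c.chainsHaveSups, c.prefixEmbedding.mk_immSucc_le,
    (Cardinal.mk_subtype_le _).trans_eq (Cardinal.mk_list_eq_mk K), c.chainsHaveSups,
    fun _ => isBasicOpen_leafLab hc⟩

theorem eval_toLTree [Nonempty K] (t : c.toLTree.T) :
    c.toLTree.eval c.wellFounded t = (c.nodeCode t).eval := by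
  induction t using c.wellFounded.induction with
  | _ t ih =>
  cases h : c.nodeCode t with
  | leaf S => exact (LTree.eval_of_isLeaf _ (isLeaf_of_nodeCode_eq_leaf h)).trans (congrArg label h)
  | node b g =>
    have hl := not_isLeaf_of_nodeCode_eq_node h
    have hchild : ∀ a, c.toLTree.eval c.wellFounded (child h a) = (g a).eval := fun a =>
      (ih _ (immSucc_child h a)).trans (congrArg eval (nodeCode_child h a))
    cases b with
    | false =>
      rw [LTree.eval_of_not_isUnion _ hl (congrArg BorelCode.isUnion h),
        ← (surjective_child h).iInter_comp]
      exact Set.iInter_congr hchild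
    | true =>
      rw [LTree.eval_of_isUnion _ hl (congrArg BorelCode.isUnion h),
        ← (surjective_child h).iUnion_comp]
      exact Set.iUnion_congr hchild

theorem iiWins_toLTree_iff [Nonempty K] (ξ : K → K) : c.toLTree.IIWins ξ ↔ ξ ∈ c.eval := by
  rw [c.prefixEmbedding.iiWins_iff_mem_eval c.wellFounded (r := c.root) rfl, eval_toLTree,
    nodeCode_root]

def codedStrategy (cd : List K → K) (η : K → K) (t : c.toLTree.T) : c.toLTree.T :=
  if h : (c.subcode (t.1 ++ [η (cd t.1)])).isSome then ⟨_, h⟩ else t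

variable {c} {cd : List K → K}

theorem codedStrategy_eq_child {t : c.toLTree.T} {b : Bool} {g : K → BorelCode K}
    (h : c.nodeCode t = node b g) (η : K → K) : c.codedStrategy cd η t = child h (η (cd t.1)) :=
  dif_pos (by simp [subcode_append_singleton h])

theorem legal_codedStrategy (η : K → K) : c.toLTree.Legal (c.codedStrategy cd η) := by
  intro t hl _
  obtain ⟨b, g, h⟩ := exists_nodeCode_eq_node hl
  rw [codedStrategy_eq_child h]
  exact immSucc_child h _

theorem exists_codedStrategy_eq [Nonempty K] (hcd : Function.Injective cd)
    {σ : c.toLTree.T → c.toLTree.T} (hσ : c.toLTree.Legal σ) :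
    ∃ η, ∀ t, ¬ c.toLTree.IsLeaf t → c.toLTree.isUnion t = true → c.codedStrategy cd η t = σ t := by
  have hmove : ∀ t, ∃ x : K, ¬ c.toLTree.IsLeaf t → c.toLTree.isUnion t = true →
      (σ t).1 = t.1 ++ [x] := fun t => by
    by_cases h : ¬ c.toLTree.IsLeaf t ∧ c.toLTree.isUnion t = true
    · obtain ⟨x, hx⟩ := c.prefixEmbedding.exists_toList_eq_append_of_immSucc (hσ t h.1 h.2)
      exact ⟨x, fun _ _ => hx⟩
    · exact ⟨Classical.arbitrary K, fun hl hu => absurd ⟨hl, hu⟩ h⟩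
  choose x hx using hmove
  have hinj : Function.Injective fun t : c.toLTree.T => cd t.1 :=
    fun _ _ h => Subtype.ext (hcd h)
  refine ⟨Function.extend (fun t : c.toLTree.T => cd t.1) x id, fun t hl hu => ?_⟩
  obtain ⟨b, g, h⟩ := exists_nodeCode_eq_node hl
  rw [codedStrategy_eq_child h, hinj.extend_apply]
  exact Subtype.ext (hx t hl hu).symm

/-- At a union node the coded move is read off the single coordinate `η (cd t)`. -/
theorem kBorel2_mem_evalAlong [Infinite K] (hc : c.Valid) (t : c.toLTree.T) :
    KBorel2 {p : (K → K) × (K → K) |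
      p.1 ∈ c.toLTree.evalAlong c.wellFounded (c.codedStrategy cd p.2) t} := by
  induction t using c.wellFounded.induction with
  | _ t ih =>
  by_cases hl : c.toLTree.IsLeaf t
  · simp only [LTree.evalAlong_of_isLeaf _ hl]
    exact .basic _ ⟨_, Set.univ, isBasicOpen_leafLab hc hl, isBasicOpen_univ, by ext; simp⟩
  obtain ⟨b, g, h⟩ := exists_nodeCode_eq_node hl
  cases hu : c.toLTree.isUnion t
  · simp only [LTree.evalAlong_of_not_isUnion _ hl hu, Set.mem_iInter, Set.ofPred_forall]
    exact .iInter _ _ (c.prefixEmbedding.mk_immSucc_le t) fun s => ih s s.2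
  · have : {p : (K → K) × (K → K) |
        p.1 ∈ c.toLTree.evalAlong c.wellFounded (c.codedStrategy cd p.2) t} =
        ⋃ a, {p | p.2 (cd t.1) = a} ∩
          {p | p.1 ∈ c.toLTree.evalAlong c.wellFounded (c.codedStrategy cd p.2) (child h a)} := by
      ext ⟨ξ, η⟩
      simp only [LTree.evalAlong_of_isUnion _ (legal_codedStrategy η) hl hu,
        codedStrategy_eq_child h, Set.mem_iUnion, Set.mem_inter_iff, Set.mem_ofPred_eq]
      exact ⟨fun hξ => ⟨_, rfl, hξ⟩, fun ⟨_, ha, hξ⟩ => ha ▸ hξ⟩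
    rw [this]
    refine .iUnion _ _ le_rfl fun a => kBorel2_inter (.basic _ ?_) (ih _ (immSucc_child h a))
    refine ⟨Set.univ, nbhd {cd t.1} fun _ => a, isBasicOpen_univ,
      isBasicOpen_nbhd_singleton _ _, by ext; simp [nbhd]⟩

theorem isCode_toLTree [Infinite K] (hc : c.Valid) : c.toLTree.IsCode := by
  obtain ⟨cd⟩ := (Cardinal.mk_list_eq_mk K).le
  refine ⟨Set.univ, c.codedStrategy cd, isKClosed_univ, fun η _ => legal_codedStrategy η,
    fun ξ ⟨σ, hσ, hw⟩ => ?_, ?_⟩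
  · obtain ⟨η, hη⟩ := exists_codedStrategy_eq cd.injective hσ
    exact ⟨η, Set.mem_univ η, LTree.wins_congr hη hw⟩
  · have : {p : (K → K) × (K → K) | p.2 ∈ Set.univ ∧ c.toLTree.Wins (c.codedStrategy cd p.2) p.1}
        = {p | p.1 ∈ c.toLTree.evalAlong c.wellFounded (c.codedStrategy cd p.2) c.root} := by
      ext ⟨ξ, η⟩
      simp only [Set.mem_univ, true_and, Set.mem_ofPred_eq]
      exact c.prefixEmbedding.wins_iff_mem_evalAlong c.wellFounded (legal_codedStrategy η) rfl ξ
    rw [this]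
    exact kBorel2_mem_evalAlong hc c.root

end BorelCode

theorem statement12_general (K : Type u) [LinearOrder K] (hinf : ℵ₀ ≤ #K) :
    ∀ X : Set (K → K),
      KBorel X ↔
        ∃ G : LTree K, G.Good #K ∧ G.IsCode ∧ G.SubtreeOfFinSeqs ∧
          ∀ ξ : K → K, ξ ∈ X ↔ G.IIWins ξ := by
  have : Infinite K := Cardinal.infinite_iff.2 hinf
  intro X
  constructor
  · intro hX
    obtain ⟨c, hc, rfl⟩ := (BorelCode.isCoded_and_isCoded_compl hX).1
    exact ⟨c.toLTree, c.good_toLTree hc, c.isCode_toLTree hc, c.subtreeOfFinSeqs,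
      fun ξ => (c.iiWins_toLTree_iff ξ).symm⟩
  · rintro ⟨G, hg, -, hsub, hX⟩
    rw [show X = {ξ | G.IIWins ξ} from Set.ext hX]
    exact kBorel_setOf_iiWins hg hsub

/-- Suppose κ^ω = κ. A set X ⊆ κ^κ is κ-Borel if and only if there is a
κ-Borel*-code (T,L) with T a subtree of κ^{<ω} such that for all ξ, ξ ∈ X iff II has a
winning strategy in GB(ξ,(T,L)). -/
theorem statement12 (K : Type u) [LinearOrder K] (hinf : ℵ₀ ≤ #K)
    (hpow : (#K) ^ (ℵ₀ : Cardinal.{u}) = #K) :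
    ∀ X : Set (K → K),
      KBorel X ↔
        ∃ G : LTree K, G.Good #K ∧ G.IsCode ∧ G.SubtreeOfFinSeqs ∧
          ∀ ξ : K → K, ξ ∈ X ↔ G.IIWins ξ :=
  statement12_general K hinf

end GDST
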